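/- Let V : S² → ℝ³ satisfy ‖V(q)‖ = 1 and ⟨q, V(q)⟩ = 0 for every q ∈ S². Then there exists a map M : SO(3) → SO(3) such that M(g) ∈ Ω(g) for every g, M(h·g) = M(g) for all h ∈ R_Y and g ∈ SO(3), and (M(g))⁻¹·t = V(g⁻¹·p) for every g ∈ SO(3); moreover M is continuous whenever V is continuous. -/

import Mathlib

open Matrix RealInnerProductSpace

noncomputable section

/-- Euclidean 3-space. -/
abbrev E3 := EuclideanSpace ℝ (Fin 3)

/-- The special orthogonal group SO(3): the subgroup of the real orthogonal group
(3×3 real matrices whose transpose is their inverse) consisting of matrices of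
determinant 1. -/
def SO3 : Subgroup (Matrix.unitaryGroup (Fin 3) ℝ) where
  carrier := {A | (A : Matrix (Fin 3) (Fin 3) ℝ).det = 1}
  one_mem' := by simp
  mul_mem' := by
    intro a b ha hb
    simp only [Set.mem_setOf_eq, Submonoid.coe_mul, Matrix.det_mul] at *
    rw [ha, hb, mul_one]
  inv_mem' := by
    intro a ha
    simp only [Set.mem_setOf_eq] at *
    have h : ((a⁻¹ : Matrix.unitaryGroup (Fin 3) ℝ) : Matrix (Fin 3) (Fin 3) ℝ)
        = star (a : Matrix (Fin 3) (Fin 3) ℝ) := rfl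
    rw [h, Matrix.star_eq_conjTranspose, Matrix.det_conjTranspose]
    simp [ha]

/-- The action of an element of SO(3) on Euclidean 3-space, by matrix-vector
multiplication. -/
def act (g : SO3) (v : E3) : E3 :=
  (EuclideanSpace.equiv (Fin 3) ℝ).symm
    (((g : Matrix.unitaryGroup (Fin 3) ℝ) : Matrix (Fin 3) (Fin 3) ℝ).mulVec
      (EuclideanSpace.equiv (Fin 3) ℝ v))

/-- The north pole p = (0,1,0). -/
def pY : E3 := (EuclideanSpace.equiv (Fin 3) ℝ).symm ![0, 1, 0]

/-- The tangent vector t = (1,0,0). -/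
def tX : E3 := (EuclideanSpace.equiv (Fin 3) ℝ).symm ![1, 0, 0]

/-- The set R_Y of rotations about the Y axis, i.e. elements of SO(3) fixing p = (0,1,0). -/
def RY : Set SO3 := {h | act h pY = pY}

/-- The orbit Ω(g) of g under left multiplication by rotations about the Y axis. -/
def orbit (g : SO3) : Set SO3 := {g' | ∃ h ∈ RY, g' = h * g}

/-- The unit 2-sphere in Euclidean 3-space. -/
def S2 := {q : E3 // ‖q‖ = 1}

instance : TopologicalSpace S2 := instTopologicalSpaceSubtype

instance : CoeOut S2 E3 := ⟨Subtype.val⟩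

/-! ### Auxiliary constructions -/

namespace TangentSelAux

/-- Minus the cross product of `u` and `v`. -/
def nw (u v : Fin 3 → ℝ) : Fin 3 → ℝ :=
  ![u 2 * v 1 - u 1 * v 2, u 0 * v 2 - u 2 * v 0, u 1 * v 0 - u 0 * v 1]

/-- The rotation with rows `v`, `u`, `-(u × v)`. -/
def matA (u v : Fin 3 → ℝ) : Matrix (Fin 3) (Fin 3) ℝ :=
  Matrix.of ![v, u, nw u v]

variable {u v : Fin 3 → ℝ}

lemma matA_mem (hu : u 0 * u 0 + u 1 * u 1 + u 2 * u 2 = 1)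
    (hv : v 0 * v 0 + v 1 * v 1 + v 2 * v 2 = 1)
    (huv : u 0 * v 0 + u 1 * v 1 + u 2 * v 2 = 0) :
    matA u v ∈ Matrix.unitaryGroup (Fin 3) ℝ := by
  rw [Matrix.mem_unitaryGroup_iff]
  ext i j
  fin_cases i <;> fin_cases j <;>
    simp [matA, nw, Matrix.mul_apply, Fin.sum_univ_three, Matrix.star_eq_conjTranspose,
      Matrix.conjTranspose_apply, Matrix.one_apply, Matrix.transpose_apply, Matrix.vecHead,
      Matrix.vecTail] <;>
    first
      | ring1
      | linear_combination hu
      | linear_combination hv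
      | linear_combination huv
      | linear_combination (v 0 * v 0 + v 1 * v 1 + v 2 * v 2) * hu + hv
          - (u 0 * v 0 + u 1 * v 1 + u 2 * v 2) * huv

lemma matA_det (hu : u 0 * u 0 + u 1 * u 1 + u 2 * u 2 = 1)
    (hv : v 0 * v 0 + v 1 * v 1 + v 2 * v 2 = 1)
    (huv : u 0 * v 0 + u 1 * v 1 + u 2 * v 2 = 0) :
    (matA u v).det = 1 := by
  rw [Matrix.det_fin_three]
  simp only [matA, nw, Matrix.of_apply]
  simp [Matrix.cons_val_zero, Matrix.cons_val_one]
  linear_combination (v 0 * v 0 + v 1 * v 1 + v 2 * v 2) * hu + hv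
      - (u 0 * v 0 + u 1 * v 1 + u 2 * v 2) * huv

lemma matA_mulVec_u (hu : u 0 * u 0 + u 1 * u 1 + u 2 * u 2 = 1)
    (huv : u 0 * v 0 + u 1 * v 1 + u 2 * v 2 = 0) :
    (matA u v).mulVec u = ![0, 1, 0] := by
  funext i
  fin_cases i <;>
    simp [matA, nw, Matrix.mulVec, dotProduct, Fin.sum_univ_three] <;>
    first
      | ring1
      | linear_combination hu
      | linear_combination huv

lemma matA_mulVec_v (hv : v 0 * v 0 + v 1 * v 1 + v 2 * v 2 = 1)
    (huv : u 0 * v 0 + u 1 * v 1 + u 2 * v 2 = 0) :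
    (matA u v).mulVec v = ![1, 0, 0] := by
  funext i
  fin_cases i <;>
    simp [matA, nw, Matrix.mulVec, dotProduct, Fin.sum_univ_three] <;>
    first
      | ring1
      | linear_combination hv
      | linear_combination huv

/-- Bundling `matA` as an element of SO(3). -/
def mkSO3 (u v : Fin 3 → ℝ) (hu : u 0 * u 0 + u 1 * u 1 + u 2 * u 2 = 1)
    (hv : v 0 * v 0 + v 1 * v 1 + v 2 * v 2 = 1)
    (huv : u 0 * v 0 + u 1 * v 1 + u 2 * v 2 = 0) : SO3 :=
  ⟨⟨matA u v, matA_mem hu hv huv⟩, matA_det hu hv huv⟩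

lemma act_mul (a b : SO3) (x : E3) : act (a * b) x = act a (act b x) := by
  simp [act, Matrix.mulVec_mulVec]
  rw [← Matrix.mulVec_mulVec]
  rfl

lemma act_one (x : E3) : act 1 x = x := by simp [act]

lemma act_inv_act (a : SO3) (x : E3) : act a⁻¹ (act a x) = x := by
  rw [← act_mul, inv_mul_cancel, act_one]

lemma act_act_inv (a : SO3) (x : E3) : act a (act a⁻¹ x) = x := by
  rw [← act_mul, mul_inv_cancel, act_one]

lemma row_eq (g : SO3) (i : Fin 3) :
    act g⁻¹ pY i = ((g : Matrix.unitaryGroup (Fin 3) ℝ) : Matrix (Fin 3) (Fin 3) ℝ) 1 i := by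
  have h1 : act g⁻¹ pY i =
      (Matrix.mulVec (((g⁻¹ : SO3) : Matrix.unitaryGroup (Fin 3) ℝ) :
        Matrix (Fin 3) (Fin 3) ℝ) ![0, 1, 0]) i := rfl
  have h2 : (((g⁻¹ : SO3) : Matrix.unitaryGroup (Fin 3) ℝ) : Matrix (Fin 3) (Fin 3) ℝ)
      = star ((g : Matrix.unitaryGroup (Fin 3) ℝ) : Matrix (Fin 3) (Fin 3) ℝ) := rfl
  rw [h1, h2]
  simp [Matrix.mulVec, dotProduct, Fin.sum_univ_three, Matrix.star_eq_conjTranspose,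
    Matrix.conjTranspose_apply]

lemma row_sq (g : SO3) :
    act g⁻¹ pY 0 * act g⁻¹ pY 0 + act g⁻¹ pY 1 * act g⁻¹ pY 1
      + act g⁻¹ pY 2 * act g⁻¹ pY 2 = 1 := by
  have hmem := Matrix.mem_unitaryGroup_iff.mp
    (g : Matrix.unitaryGroup (Fin 3) ℝ).2
  have h11 := congrFun (congrFun hmem 1) 1
  simp only [Matrix.mul_apply, Fin.sum_univ_three, Matrix.star_eq_conjTranspose,
    Matrix.conjTranspose_apply, Matrix.one_apply_eq, RCLike.star_def, starRingEnd_apply,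
    star_trivial] at h11
  simp only [row_eq]
  linarith [h11]

lemma norm_q (g : SO3) : ‖act g⁻¹ pY‖ = 1 := by
  have h := row_sq g
  have : ‖act g⁻¹ pY‖ ^ 2 = 1 := by
    rw [← real_inner_self_eq_norm_sq]
    simp only [PiLp.inner_apply, RCLike.inner_apply, Fin.sum_univ_three, conj_trivial]
    linarith [h]
  nlinarith [norm_nonneg (act g⁻¹ pY)]

lemma inner_expand (x y : E3) : ⟪x, y⟫ = x 0 * y 0 + x 1 * y 1 + x 2 * y 2 := by
  simp [PiLp.inner_apply, RCLike.inner_apply, Fin.sum_univ_three, mul_comm]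

lemma norm_sq_expand (x : E3) (h : ‖x‖ = 1) : x 0 * x 0 + x 1 * x 1 + x 2 * x 2 = 1 := by
  have := real_inner_self_eq_norm_sq x
  rw [h, inner_expand] at this
  linarith [this]

end TangentSelAux

open TangentSelAux

/-- Given a unit tangent vector field `V` on the sphere, there is a representative-selection
map `M` on SO(3), constant on orbits, with `(M g)⁻¹ t = V (g⁻¹ p)` for all `g`; it is
continuous whenever `V` is. -/
theorem unit_tangent_field_induces_selection (V : S2 → E3)
    (hV : ∀ q : S2, ‖V q‖ = 1 ∧ ⟪(q : E3), V q⟫ = 0) :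
    ∃ M : SO3 → SO3,
      (∀ g : SO3, M g ∈ orbit g) ∧
      (∀ (g h : SO3), h ∈ RY → M (h * g) = M g) ∧
      (∀ (g : SO3) (q : S2), (q : E3) = act g⁻¹ pY → act (M g)⁻¹ tX = V q) ∧
      (Continuous V → Continuous M) := by
  -- the point on the sphere associated to g
  set qv : SO3 → E3 := fun g => act g⁻¹ pY with hqv
  have hqnorm : ∀ g, ‖qv g‖ = 1 := fun g => norm_q g
  set qS : SO3 → S2 := fun g => ⟨qv g, hqnorm g⟩ with hqS
  have hu : ∀ g, qv g 0 * qv g 0 + qv g 1 * qv g 1 + qv g 2 * qv g 2 = 1 :=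
    fun g => row_sq g
  have hv : ∀ g, (V (qS g)) 0 * (V (qS g)) 0 + (V (qS g)) 1 * (V (qS g)) 1
      + (V (qS g)) 2 * (V (qS g)) 2 = 1 :=
    fun g => norm_sq_expand _ (hV (qS g)).1
  have huv : ∀ g, qv g 0 * (V (qS g)) 0 + qv g 1 * (V (qS g)) 1
      + qv g 2 * (V (qS g)) 2 = 0 := by
    intro g
    have := (hV (qS g)).2
    rw [inner_expand] at this
    exact this
  refine ⟨fun g => mkSO3 (qv g) (V (qS g)) (hu g) (hv g) (huv g), ?_, ?_, ?_, ?_⟩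
  · -- M g ∈ orbit g
    intro g
    set M := mkSO3 (qv g) (V (qS g)) (hu g) (hv g) (huv g) with hM
    refine ⟨M * g⁻¹, ?_, by rw [inv_mul_cancel_right]⟩
    show act (M * g⁻¹) pY = pY
    rw [act_mul]
    have hMu : act M (qv g) = pY := by
      ext i
      have h1 : act M (qv g) i = ((matA (qv g) (V (qS g))).mulVec (qv g)) i := rfl
      rw [h1, matA_mulVec_u (hu g) (huv g)]
      rfl
    exact hMu
  · -- constancy on orbits
    intro g h hh
    have hfix : act h⁻¹ pY = pY := by
      conv_lhs => rw [← hh]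
      exact act_inv_act h pY
    have hq : qv (h * g) = qv g := by
      simp only [hqv]
      rw [_root_.mul_inv_rev, act_mul, hfix]
    have hq2 : qS (h * g) = qS g := Subtype.ext hq
    apply Subtype.ext
    apply Subtype.ext
    show matA (qv (h * g)) (V (qS (h * g))) = matA (qv g) (V (qS g))
    rw [hq, hq2]
  · -- the tangent condition
    intro g q hq
    have hqeq : q = qS g := Subtype.ext hq
    set M := mkSO3 (qv g) (V (qS g)) (hu g) (hv g) (huv g) with hM
    have hMv : act M (V (qS g)) = tX := by
      ext i
      have h1 : act M (V (qS g)) i = ((matA (qv g) (V (qS g))).mulVec (V (qS g))) i := rfl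
      rw [h1, matA_mulVec_v (hv g) (huv g)]
      rfl
    rw [hqeq, ← hMv, act_inv_act]
  · -- continuity
    intro hVc
    apply Continuous.subtype_mk
    apply Continuous.subtype_mk
    apply continuous_matrix
    intro i j
    -- continuity of the entries of matA
    have cu : ∀ k : Fin 3, Continuous fun g : SO3 => qv g k := by
      intro k
      have : (fun g : SO3 => qv g k) = fun g : SO3 =>
          ((g : Matrix.unitaryGroup (Fin 3) ℝ) : Matrix (Fin 3) (Fin 3) ℝ) 1 k := by
        funext g
        exact row_eq g k
      rw [this]
      exact ((continuous_subtype_val.comp continuous_subtype_val).matrix_elem 1 k)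
    have cqv : Continuous qv := by
      have : qv = fun g => (WithLp.equiv 2 (Fin 3 → ℝ)).symm (fun k => qv g k) := by
        funext g
        rfl
      rw [this]
      exact (PiLp.continuous_toLp 2 (fun _ : Fin 3 => ℝ)).comp (continuous_pi cu)
    have cqS : Continuous qS := Continuous.subtype_mk cqv _
    have cV : Continuous fun g => V (qS g) := hVc.comp cqS
    have cv : ∀ k : Fin 3, Continuous fun g : SO3 => (V (qS g)) k := by
      intro k
      exact (continuous_apply k).comp ((PiLp.continuous_ofLp 2 (fun _ : Fin 3 => ℝ)).comp cV)
    fin_cases i <;> fin_cases j <;>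
      simp [mkSO3, matA, nw, Matrix.vecHead, Matrix.vecTail] <;>
      fun_prop
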